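/- arXiv:1909.07478 — 3 statements merged into one kernel-verified Lean document; each statement's English description precedes it below -/
import Mathlib

section
/- Let S ⊆ T be two markings on a category C and let F : C ⥤ Type u be a functor which commutes with pullbacks along T, i.e. for every t : D ⟶ C in T and every morphism E ⟶ C the canonical map F(D ×_C E) ⟶ F(D) ×_{F(C)} F(E) is a bijection. Then F is an S-cosheaf if and only if F(s) : F(C₀) ⟶ F(C) is surjective for every morphism s : C₀ ⟶ C belonging to S. -/
open CategoryTheory Limits

universe w v u

variable {C : Type u} [Category.{v} C]

/-- A *marking* on a category `C`: a class of morphisms containing all isomorphisms,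
stable under composition, such that pullbacks along its members exist and it is
stable under such pullbacks. -/
structure Marking (S : MorphismProperty C) : Prop where
  of_isIso : ∀ {X Y : C} (f : X ⟶ Y), IsIso f → S f
  comp_mem : ∀ {X Y Z : C} {f : X ⟶ Y} {g : Y ⟶ Z}, S f → S g → S (f ≫ g)
  hasPullback : ∀ {X Y Z : C} (s : X ⟶ Z) (g : Y ⟶ Z), S s → HasPullback s g
  snd_mem : ∀ {X Y Z : C} (s : X ⟶ Z) (g : Y ⟶ Z) (hs : S s),
    letI := hasPullback s g hs
    S (pullback.snd s g)

/-- The iterated fibre powers of a morphism `s : C₀ ⟶ X` of a marking,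
together with their projections to `X`, which again belong to the marking:
`fibrePowerAux n` is the `(n+1)`-fold fibre power `C₀ ×_X ⋯ ×_X C₀`. -/
noncomputable def Marking.fibrePowerAux {S : MorphismProperty C} (hS : Marking S)
    {C₀ X : C} (s : C₀ ⟶ X) (hs : S s) : (n : ℕ) → Σ' (Z : C) (p : Z ⟶ X), S p
  | 0 => ⟨C₀, s, hs⟩
  | n + 1 =>
    let prev := hS.fibrePowerAux s hs n
    letI := hS.hasPullback prev.2.1 s prev.2.2
    ⟨pullback prev.2.1 s, pullback.snd prev.2.1 s ≫ s,
      hS.comp_mem (hS.snd_mem prev.2.1 s prev.2.2) hs⟩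

/-- The `(n+1)`-fold fibre power `C₀ ×_X ⋯ ×_X C₀` of a morphism `s : C₀ ⟶ X`
belonging to a marking. -/
noncomputable def Marking.fibrePower {S : MorphismProperty C} (hS : Marking S)
    {C₀ X : C} (s : C₀ ⟶ X) (hs : S s) (n : ℕ) : C :=
  (hS.fibrePowerAux s hs n).1

/-- The projection from the `(n+1)`-fold fibre power of `s : C₀ ⟶ X` to the base `X`. -/
noncomputable def Marking.fibrePowerHom {S : MorphismProperty C} (hS : Marking S)
    {C₀ X : C} (s : C₀ ⟶ X) (hs : S s) (n : ℕ) : hS.fibrePower s hs n ⟶ X :=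
  (hS.fibrePowerAux s hs n).2.1

/-- A full subcategory (given by a predicate `P` on objects) is *downward closed*
with respect to a marking `S` if whenever `s : C₀ ⟶ X` belongs to `S` and all the
iterated fibre powers `C₀ ×_X ⋯ ×_X C₀` satisfy `P`, then so does `X`. -/
def DownwardClosed {S : MorphismProperty C} (hS : Marking S) (P : C → Prop) : Prop :=
  ∀ {C₀ X : C} (s : C₀ ⟶ X) (hs : S s), (∀ n : ℕ, P (hS.fibrePower s hs n)) → P X

/-- A full subcategory (given by a predicate `P` on objects) is *generating* with
respect to a marking `S` if it is closed under pullbacks along morphisms of `S` and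
the only downward closed full subcategory containing it is the whole category. -/
structure IsGenerating {S : MorphismProperty C} (hS : Marking S) (P : C → Prop) : Prop where
  pullback_mem : ∀ {A B X : C} (s : A ⟶ X) (g : B ⟶ X) (hs : S s),
    P A → P B → P X →
    letI := hS.hasPullback s g hs
    P (pullback s g)
  generates : ∀ Q : C → Prop, DownwardClosed hS Q → (∀ X, P X → Q X) → ∀ X, Q X

/-- The canonical comparison map `F(D ×_X E) ⟶ F(D) ×_{F(X)} F(E)` for a
`Type`-valued functor `F`. -/
noncomputable def comparisonMap (F : C ⥤ Type w) {D E X : C} (t : D ⟶ X) (g : E ⟶ X)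
    [hpb : HasPullback t g] (z : F.obj (pullback t g)) :
    { p : F.obj D × F.obj E // F.map t p.1 = F.map g p.2 } :=
  ⟨(F.map (pullback.fst t g) z, F.map (pullback.snd t g) z), by
    rw [← FunctorToTypes.map_comp_apply, ← FunctorToTypes.map_comp_apply,
      pullback.condition]⟩

/-- A functor `F : C ⥤ Type` is an `S`-cosheaf if for every `s : C₀ ⟶ X` in `S`
the diagram `F(C₀ ×_X C₀) ⇉ F(C₀) ⟶ F(X)` is a coequalizer. -/
def IsCosheaf {S : MorphismProperty C} (hS : Marking S) (F : C ⥤ Type w) : Prop :=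
  ∀ {C₀ X : C} (s : C₀ ⟶ X) (hs : S s),
    letI := hS.hasPullback s s hs
    Nonempty (IsColimit (Cofork.ofπ
      (f := F.map (pullback.fst s s)) (g := F.map (pullback.snd s s)) (F.map s)
      (by rw [← F.map_comp, ← F.map_comp, pullback.condition])))

/-- A functor `F : C ⥤ Type` is `T`-adapted if it commutes with pullbacks along
morphisms of `T`. -/
def IsAdapted {T : MorphismProperty C} (hT : Marking T) (F : C ⥤ Type w) : Prop :=
  ∀ {D E X : C} (t : D ⟶ X) (ht : T t) (g : E ⟶ X),
    Function.Bijective (comparisonMap F t g (hpb := hT.hasPullback t g ht))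

/-- The naturality square of `α : F ⟶ G` at `t : D ⟶ X` is a pullback square of types. -/
def SquareCartesian {F G : C ⥤ Type w} (α : F ⟶ G) {D X : C} (t : D ⟶ X) : Prop :=
  Function.Bijective (fun z : F.obj D =>
    (⟨(F.map t z, α.app D z), (FunctorToTypes.naturality α t z)⟩ :
      { p : F.obj X × G.obj D // α.app X p.1 = G.map t p.2 }))

/-- A natural transformation `α : F ⟶ G` is `T`-cartesian if all its naturality
squares at morphisms of `T` are pullback squares. -/
def IsCartesianNatTrans (T : MorphismProperty C) {F G : C ⥤ Type w} (α : F ⟶ G) : Prop :=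
  ∀ {D X : C} (t : D ⟶ X), T t → SquareCartesian α t

/-! Since `F` commutes with the pullback `C₀ ×_X C₀`, the map `F(C₀ ×_X C₀) → F(C₀) ×_{F(X)} F(C₀)`
is onto, i.e. the pair `F(C₀ ×_X C₀) ⇉ F(C₀)` covers the kernel pair of `F(s)`. A map of types
whose kernel pair is so covered is the coequalizer of the pair exactly when it is surjective. -/

namespace CategoryTheory.Limits.Types

variable {Y Z Q : Type w} {f g : Y ⟶ Z}

theorem surjective_π_of_isColimit {π : Z ⟶ Q} {w : f ≫ π = g ≫ π}
    (h : IsColimit (Cofork.ofπ π w)) : Function.Surjective π :=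
  (epi_iff_surjective π).1 (epi_of_isColimit_cofork h)

noncomputable def isColimitCoforkOfSurjective (π : Z ⟶ Q) (w : f ≫ π = g ≫ π)
    (hπ : Function.Surjective π) (hfg : ∀ a b, π a = π b → ∃ y, f y = a ∧ g y = b) :
    IsColimit (Cofork.ofπ π w) :=
  Cofork.IsColimit.mk _ (fun c => TypeCat.ofHom fun q => c.π (Function.surjInv hπ q))
    (fun c => by
      ext a
      obtain ⟨y, hy, rfl⟩ := hfg _ a (Function.surjInv_eq hπ (π a))
      simpa [hy] using ConcreteCategory.congr_hom c.condition y)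
    (fun c m hm => by
      ext q
      simpa [Function.surjInv_eq hπ q] using
        ConcreteCategory.congr_hom hm (Function.surjInv hπ q))

end CategoryTheory.Limits.Types

theorem exists_map_fst_eq_and_map_snd_eq_of_surjective_comparisonMap (F : C ⥤ Type w)
    {D E X : C} (t : D ⟶ X) (g : E ⟶ X) [HasPullback t g]
    (h : Function.Surjective (comparisonMap F t g)) {a : F.obj D} {b : F.obj E}
    (hab : F.map t a = F.map g b) :
    ∃ z, F.map (pullback.fst t g) z = a ∧ F.map (pullback.snd t g) z = b := by
  obtain ⟨z, hz⟩ := h ⟨(a, b), hab⟩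
  exact ⟨z, congrArg (fun p => p.1.1) hz, congrArg (fun p => p.1.2) hz⟩

/-- A functor `F : C ⥤ Type` which commutes with pullbacks along a
marking `T ⊇ S` is an `S`-cosheaf if and only if it sends every morphism of `S` to a
surjection. -/
theorem isCosheaf_iff_surjective_of_commutes_with_pullbacks
    {C : Type u} [Category.{v} C] {S T : MorphismProperty C}
    (hS : Marking S) (hT : Marking T) (hST : ∀ {X Y : C} (f : X ⟶ Y), S f → T f)
    (F : C ⥤ Type w)
    (hF : ∀ {D E X : C} (t : D ⟶ X) (ht : T t) (g : E ⟶ X),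
      Function.Bijective (comparisonMap F t g (hpb := hT.hasPullback t g ht))) :
    IsCosheaf hS F ↔
      ∀ {C₀ X : C} (s : C₀ ⟶ X), S s → Function.Surjective (F.map s) := by
  constructor
  · intro hcosheaf C₀ X s hs
    exact Types.surjective_π_of_isColimit (hcosheaf s hs).some
  · intro hsurj C₀ X s hs
    have := hS.hasPullback s s hs
    exact ⟨Types.isColimitCoforkOfSurjective _ _ (hsurj s hs) fun _ _ hab =>
      exists_map_fst_eq_and_map_snd_eq_of_surjective_comparisonMap F s s
        (hF s (hST s hs) s).2 hab⟩
end

section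
/- Let S ⊆ T be two markings on a category C, let F, G : C ⥤ Type u be functors, and let α : F ⟶ G be a natural transformation which is T-cartesian. If G is a T-adapted S-cosheaf, then F is also a T-adapted S-cosheaf. -/
open CategoryTheory Limits

universe w v u

variable {C : Type u} [Category.{v} C]

/-! Cartesianness of `α` at `t : D ⟶ X` in `T` says `F(D) = F(X) ×_{G(X)} G(D)`. Since `S ⊆ T` and
`T` is stable under pullback, the diagrams `F(C₀ ×_X C₀) ⇉ F(C₀) ⟶ F(X)` and
`F(D ×_X E) ⟶ F(D) ×_{F(X)} F(E)` are obtained from those of `G` by base change along `α`, and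
base change in `Type` preserves pullbacks (by pasting) and coequalizers: a zigzag of generating
relations in `G(C₀)` joining two points of one fibre of `G(s)` stays in that fibre, so it lifts
step by step to `F(C₀)`. -/

namespace Function.Coequalizer

theorem apply_eq_of_eqvGen {α β γ : Type*} {f g : α → β} {u : β → γ} (hu : u ∘ f = u ∘ g)
    {b b' : β} (h : Relation.EqvGen (Rel f g) b b') : u b = u b' :=
  congrArg (desc f g u hu) (Quot.eqvGen_sound h)

end Function.Coequalizer

namespace CategoryTheory.Limits.Types

open Function.Coequalizer in
theorem nonempty_isColimit_cofork_iff {R A B : Type w} {f g : R ⟶ A} {π : A ⟶ B}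
    (w : f ≫ π = g ≫ π) :
    Nonempty (IsColimit (Cofork.ofπ π w)) ↔
      Function.Surjective π ∧ ∀ a a', π a = π a' → Relation.EqvGen (Rel f g) a a' := by
  let c := coequalizerColimit f g
  have hw : π ∘ f = π ∘ g := funext fun r => ConcreteCategory.congr_hom w r
  constructor
  · rintro ⟨h⟩
    have hmk : π ≫ (h.coconePointUniqueUpToIso c.isColimit).hom = ↾(mk f g) :=
      h.comp_coconePointUniqueUpToIso_hom c.isColimit WalkingParallelPair.one
    refine ⟨(epi_iff_surjective π).1 (Cofork.IsColimit.epi h), fun a a' haa' => ?_⟩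
    have hmk_apply (x : A) : (h.coconePointUniqueUpToIso c.isColimit).hom (π x) = mk f g x :=
      ConcreteCategory.congr_hom hmk x
    apply Quot.eqvGen_exact
    change mk f g a = mk f g a'
    rw [← hmk_apply, ← hmk_apply, haa']
  · rintro ⟨hsurj, hker⟩
    have hbij : Function.Bijective (desc f g π hw) := by
      refine ⟨fun q q' hqq' => ?_, fun b => ?_⟩
      · induction q using Quot.ind
        induction q' using Quot.ind
        exact Quot.eqvGen_sound (hker _ _ hqq')
      · obtain ⟨a, rfl⟩ := hsurj b
        exact ⟨mk f g a, rfl⟩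
    exact ⟨IsColimit.ofIsoColimit c.isColimit (Cofork.ext (Equiv.ofBijective _ hbij).toIso rfl)⟩

end CategoryTheory.Limits.Types

@[simp]
theorem comparisonMap_coe (F : C ⥤ Type w) {D E X : C} (t : D ⟶ X) (g : E ⟶ X)
    [HasPullback t g] (z : F.obj (pullback t g)) :
    (comparisonMap F t g z : F.obj D × F.obj E) =
      (F.map (pullback.fst t g) z, F.map (pullback.snd t g) z) :=
  rfl

namespace SquareCartesian

variable {F G : C ⥤ Type w} {α : F ⟶ G}

section

variable {D X : C} {t : D ⟶ X}

theorem ext (h : SquareCartesian α t) {a a' : F.obj D} (hF : F.map t a = F.map t a')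
    (hα : α.app D a = α.app D a') : a = a' :=
  h.injective (Subtype.ext (Prod.ext hF hα))

theorem exists_lift (h : SquareCartesian α t) (x : F.obj X) (d : G.obj D)
    (hxd : α.app X x = G.map t d) : ∃ a, F.map t a = x ∧ α.app D a = d := by
  obtain ⟨a, ha⟩ := h.surjective ⟨(x, d), hxd⟩
  exact ⟨a, congrArg (fun p => p.1.1) ha, congrArg (fun p => p.1.2) ha⟩

end

open Function.Coequalizer

section Cosheaf

variable {C₀ X : C} {s : C₀ ⟶ X} [HasPullback s s]

theorem rel_of_rel_app (hs : SquareCartesian α s)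
    (hfst : SquareCartesian α (pullback.fst s s ≫ s)) {a a' : F.obj C₀}
    (h : Rel (G.map (pullback.fst s s)) (G.map (pullback.snd s s)) (α.app C₀ a) (α.app C₀ a'))
    (hsa : F.map s a = F.map s a') :
    Rel (F.map (pullback.fst s s)) (F.map (pullback.snd s s)) a a' := by
  generalize hb : α.app C₀ a = b at h
  generalize hb' : α.app C₀ a' = b' at h
  obtain ⟨z⟩ := h
  obtain ⟨w, hw, rfl⟩ := hfst.exists_lift (F.map s a) z (by
    rw [NatTrans.naturality_apply, hb, Functor.map_comp_apply])
  have ha : F.map (pullback.fst s s) w = a :=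
    hs.ext (by rw [← Functor.map_comp_apply, hw]) (by rw [NatTrans.naturality_apply, hb])
  have ha' : F.map (pullback.snd s s) w = a' :=
    hs.ext (by rw [← Functor.map_comp_apply, ← pullback.condition, hw, hsa])
      (by rw [NatTrans.naturality_apply, hb'])
  exact ha ▸ ha' ▸ Rel.intro w

theorem eqvGen_of_eqvGen_app (hs : SquareCartesian α s)
    (hfst : SquareCartesian α (pullback.fst s s ≫ s)) {a a' : F.obj C₀}
    (h : Relation.EqvGen (Rel (G.map (pullback.fst s s)) (G.map (pullback.snd s s)))
      (α.app C₀ a) (α.app C₀ a'))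
    (hsa : F.map s a = F.map s a') :
    Relation.EqvGen (Rel (F.map (pullback.fst s s)) (F.map (pullback.snd s s))) a a' := by
  generalize hb : α.app C₀ a = b at h
  generalize hb' : α.app C₀ a' = b' at h
  induction h generalizing a a' with
  | rel _ _ h => exact .rel _ _ (rel_of_rel_app hs hfst (hb ▸ hb' ▸ h) hsa)
  | refl => exact hs.ext hsa (hb.trans hb'.symm) ▸ .refl a
  | symm _ _ _ ih => exact .symm _ _ (ih hsa.symm hb' hb)
  | trans _ y _ hy _ ih ih' =>
    have hGs : G.map s ∘ G.map (pullback.fst s s) = G.map s ∘ G.map (pullback.snd s s) :=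
      funext fun z => by rw [Function.comp_apply, Function.comp_apply,
        ← Functor.map_comp_apply, ← Functor.map_comp_apply, pullback.condition]
    obtain ⟨a'', ha'', rfl⟩ := hs.exists_lift (F.map s a) y (by
      rw [NatTrans.naturality_apply, hb, apply_eq_of_eqvGen hGs hy])
    exact .trans _ _ _ (ih ha''.symm hb rfl) (ih' (ha''.trans hsa) rfl hb')

theorem nonempty_isColimit_cofork (hs : SquareCartesian α s)
    (hfst : SquareCartesian α (pullback.fst s s ≫ s))
    (hG : Nonempty (IsColimit (Cofork.ofπ
      (f := G.map (pullback.fst s s)) (g := G.map (pullback.snd s s)) (G.map s)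
      (by rw [← G.map_comp, ← G.map_comp, pullback.condition])))) :
    Nonempty (IsColimit (Cofork.ofπ
      (f := F.map (pullback.fst s s)) (g := F.map (pullback.snd s s)) (F.map s)
      (by rw [← F.map_comp, ← F.map_comp, pullback.condition]))) := by
  rw [Types.nonempty_isColimit_cofork_iff] at hG ⊢
  obtain ⟨hsurj, hker⟩ := hG
  refine ⟨fun x => ?_, fun a a' hsa => eqvGen_of_eqvGen_app hs hfst (hker _ _ ?_) hsa⟩
  · obtain ⟨b, hb⟩ := hsurj (α.app X x)
    obtain ⟨a, ha, -⟩ := hs.exists_lift x b hb.symm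
    exact ⟨a, ha⟩
  · rw [← NatTrans.naturality_apply, ← NatTrans.naturality_apply, hsa]

end Cosheaf

section Adapted

variable {D E X : C} {t : D ⟶ X} {g : E ⟶ X} [HasPullback t g]

theorem comparisonMap_injective (hsnd : SquareCartesian α (pullback.snd t g))
    (hG : Function.Injective (comparisonMap G t g)) :
    Function.Injective (comparisonMap F t g) := by
  intro z z' hzz'
  simp only [Subtype.ext_iff, comparisonMap_coe, Prod.mk.injEq] at hzz'
  obtain ⟨hfst, hsnd'⟩ := hzz'
  refine hsnd.ext hsnd' (hG (Subtype.ext ?_))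
  simp only [comparisonMap_coe, ← NatTrans.naturality_apply, hfst, hsnd']

theorem comparisonMap_surjective (ht : SquareCartesian α t)
    (hsnd : SquareCartesian α (pullback.snd t g))
    (hG : Function.Surjective (comparisonMap G t g)) :
    Function.Surjective (comparisonMap F t g) := by
  rintro ⟨⟨d, e⟩, hde : F.map t d = F.map g e⟩
  obtain ⟨w, hw⟩ := hG ⟨(α.app D d, α.app E e), by
    rw [← NatTrans.naturality_apply, ← NatTrans.naturality_apply, hde]⟩
  simp only [Subtype.ext_iff, comparisonMap_coe, Prod.mk.injEq] at hw
  obtain ⟨hw_fst, hw_snd⟩ := hw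
  obtain ⟨z, hz, rfl⟩ := hsnd.exists_lift e w hw_snd.symm
  have hz_fst : F.map (pullback.fst t g) z = d :=
    ht.ext (by rw [← Functor.map_comp_apply, pullback.condition, Functor.map_comp_apply, hz, hde])
      (by rw [NatTrans.naturality_apply, hw_fst])
  exact ⟨z, Subtype.ext (by rw [comparisonMap_coe, hz_fst, hz])⟩

end Adapted

end SquareCartesian

/-- Let `S ⊆ T` be markings and `α : F ⟶ G` a `T`-cartesian
natural transformation of `Type`-valued functors. If `G` is a `T`-adapted
`S`-cosheaf, then so is `F`. -/
theorem isAdapted_cosheaf_of_cartesian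
    {C : Type u} [Category.{v} C] {S T : MorphismProperty C}
    (hS : Marking S) (hT : Marking T) (hST : ∀ {X Y : C} (f : X ⟶ Y), S f → T f)
    {F G : C ⥤ Type w} (α : F ⟶ G) (hα : IsCartesianNatTrans T α)
    (hGc : IsCosheaf hS G) (hGa : IsAdapted hT G) :
    IsCosheaf hS F ∧ IsAdapted hT F := by
  refine ⟨fun s hs => ?_, fun t ht g => ?_⟩
  · have := hS.hasPullback s s hs
    have hfst : S (pullback.fst s s ≫ s) := by
      rw [pullback.condition]
      exact hS.comp_mem (hS.snd_mem s s hs) hs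
    exact (hα s (hST s hs)).nonempty_isColimit_cofork (hα _ (hST _ hfst)) (hGc s hs)
  · have := hT.hasPullback t g ht
    have hsnd := hα _ (hT.snd_mem t g ht)
    exact ⟨hsnd.comparisonMap_injective (hGa t ht g).injective,
      (hα t ht).comparisonMap_surjective hsnd (hGa t ht g).surjective⟩
end

section
/- Let S ⊆ T be two markings on a category C, let F, G : C ⥤ Type u be T-adapted S-cosheaves, let α : F ⟶ G be a natural transformation, and let D ⊆ C be a generating full subcategory. If for every morphism t : D′ ⟶ D of T with D′ and D in D the naturality square of α at t is a pullback square, then α is T-cartesian, i.e. the naturality square of α at every morphism of T in C is a pullback square. -/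
open CategoryTheory Limits

universe w v u

variable {C : Type u} [Category.{v} C]

/-! Both steps descend along a cover `s : C₀ ⟶ X` of `S`: the cosheaf property makes
`F.map s` surjective, and adaptedness identifies `F (C₀ ×_X E)` with the pairs of `F C₀ × F E`
agreeing in `F X`. First, for targets in `P`, the sources `X` all of whose `T`-squares are
cartesian form a downward closed class, since cartesianness at `C₀ ⟶ D` and at
`C₀ ×_X C₀ ⟶ D` descends to `X ⟶ D`. Then the targets `X` all of whose `T`-squares are
cartesian form a downward closed class, since the square at `t : D ⟶ X` is recovered from
the one at its pullback `C₀ ×_X D ⟶ C₀`. Both classes contain `P`, hence everything. -/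

lemma Marking.fst_mem {T : MorphismProperty C} (hT : Marking T) {X Y Z : C}
    (s : X ⟶ Z) (g : Y ⟶ Z) (hg : T g) [HasPullback s g] : T (pullback.fst s g) := by
  have := hT.hasPullback g s hg
  rw [← pullbackSymmetry_hom_comp_snd s g]
  exact hT.comp_mem (hT.of_isIso _ inferInstance) (hT.snd_mem g s hg)

lemma IsCosheaf.surjective_map {S : MorphismProperty C} {hS : Marking S} {F : C ⥤ Type w}
    (hF : IsCosheaf hS F) {C₀ X : C} (s : C₀ ⟶ X) (hs : S s) :
    Function.Surjective (F.map s) := by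
  have := hS.hasPullback s s hs
  obtain ⟨hc⟩ := hF s hs
  rw [← epi_iff_surjective]
  exact ⟨fun u v huv => Cofork.IsColimit.hom_ext hc (by simpa using huv)⟩

section

variable {F G : C ⥤ Type w}

lemma comparisonMap_surjective_iff {D E X : C} (t : D ⟶ X) (g : E ⟶ X) [HasPullback t g] :
    Function.Surjective (comparisonMap F t g) ↔
      ∀ a b, F.map t a = F.map g b →
        ∃ z, F.map (pullback.fst t g) z = a ∧ F.map (pullback.snd t g) z = b := by
  refine ⟨fun h a b hab => ?_, fun h ⟨⟨a, b⟩, hab⟩ => ?_⟩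
  · obtain ⟨z, hz⟩ := h ⟨(a, b), hab⟩
    exact ⟨z, congrArg (·.1.1) hz, congrArg (·.1.2) hz⟩
  · obtain ⟨z, ha, hb⟩ := h a b hab
    exact ⟨z, Subtype.ext (Prod.ext ha hb)⟩

lemma comparisonMap_injective_iff {D E X : C} (t : D ⟶ X) (g : E ⟶ X) [HasPullback t g] :
    Function.Injective (comparisonMap F t g) ↔
      ∀ z₁ z₂, F.map (pullback.fst t g) z₁ = F.map (pullback.fst t g) z₂ →
        F.map (pullback.snd t g) z₁ = F.map (pullback.snd t g) z₂ → z₁ = z₂ :=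
  ⟨fun h _ _ h₁ h₂ => h (Subtype.ext (Prod.ext h₁ h₂)),
    fun h _ _ hz => h _ _ (congrArg (·.1.1) hz) (congrArg (·.1.2) hz)⟩

variable (α : F ⟶ G)

lemma squareCartesian_iff {D X : C} (t : D ⟶ X) :
    SquareCartesian α t ↔
      (∀ z₁ z₂, F.map t z₁ = F.map t z₂ → α.app D z₁ = α.app D z₂ → z₁ = z₂) ∧
        ∀ x g, α.app X x = G.map t g → ∃ z, F.map t z = x ∧ α.app D z = g := by
  refine ⟨fun h => ⟨fun z₁ z₂ h₁ h₂ => h.1 (Subtype.ext (Prod.ext h₁ h₂)),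
    fun x g hxg => ?_⟩, fun ⟨hinj, hsurj⟩ => ⟨fun _ _ hz => ?_, fun ⟨⟨x, g⟩, hxg⟩ => ?_⟩⟩
  · obtain ⟨z, hz⟩ := h.2 ⟨(x, g), hxg⟩
    exact ⟨z, congrArg (·.1.1) hz, congrArg (·.1.2) hz⟩
  · exact hinj _ _ (congrArg (·.1.1) hz) (congrArg (·.1.2) hz)
  · obtain ⟨z, hx, hg⟩ := hsurj x g hxg
    exact ⟨z, Subtype.ext (Prod.ext hx hg)⟩

lemma SquareCartesian.of_comp {C₀ X D : C} (s : C₀ ⟶ X) (t : X ⟶ D) [HasPullback s s]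
    (hsF : Function.Surjective (F.map s)) (hsG : Function.Surjective (G.map s))
    (hG : Function.Surjective (comparisonMap G s s))
    (h₀ : SquareCartesian α (s ≫ t)) (h₁ : SquareCartesian α (pullback.fst s s ≫ s ≫ t)) :
    SquareCartesian α t := by
  rw [squareCartesian_iff] at h₀ h₁ ⊢
  rw [comparisonMap_surjective_iff] at hG
  simp only [Functor.map_comp_apply] at h₀ h₁
  refine ⟨fun z₁ z₂ ht hα => ?_, fun x g hxg => ?_⟩
  · obtain ⟨c₁, rfl⟩ := hsF z₁
    obtain ⟨c₂, rfl⟩ := hsF z₂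
    obtain ⟨e, he₁, he₂⟩ := hG (α.app C₀ c₁) (α.app C₀ c₂) (by
      simpa only [NatTrans.naturality_apply] using hα)
    obtain ⟨w, hwF, hwG⟩ := h₁.2 (F.map t (F.map s c₁)) e (by
      rw [he₁, ← NatTrans.naturality_apply, ← NatTrans.naturality_apply])
    have hw₁ : F.map (pullback.fst s s) w = c₁ :=
      h₀.1 _ _ hwF (by rw [NatTrans.naturality_apply, hwG, he₁])
    have hw₂ : F.map (pullback.snd s s) w = c₂ := by
      refine h₀.1 _ _ ?_ (by rw [NatTrans.naturality_apply, hwG, he₂])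
      rw [← Functor.map_comp_apply F (pullback.snd s s), ← pullback.condition,
        Functor.map_comp_apply, hwF, ht]
    rw [← hw₁, ← hw₂, ← Functor.map_comp_apply, ← Functor.map_comp_apply,
      pullback.condition]
  · obtain ⟨g₀, rfl⟩ := hsG g
    obtain ⟨c, hcF, hcα⟩ := h₀.2 x g₀ hxg
    exact ⟨F.map s c, hcF, by rw [NatTrans.naturality_apply, hcα]⟩

lemma SquareCartesian.of_pullback_fst {C₀ X D : C} (s : C₀ ⟶ X) (t : D ⟶ X) [HasPullback s t]
    (hsF : Function.Surjective (F.map s)) (hF : Function.Surjective (comparisonMap F s t))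
    (hG : Function.Bijective (comparisonMap G s t))
    (h : SquareCartesian α (pullback.fst s t)) : SquareCartesian α t := by
  obtain ⟨hGinj, hGsurj⟩ := hG
  rw [squareCartesian_iff] at h ⊢
  rw [comparisonMap_surjective_iff] at hF hGsurj
  rw [comparisonMap_injective_iff] at hGinj
  refine ⟨fun z₁ z₂ ht hα => ?_, fun x g hxg => ?_⟩
  · obtain ⟨c, hc⟩ := hsF (F.map t z₁)
    obtain ⟨w₁, hw₁c, rfl⟩ := hF c z₁ hc
    obtain ⟨w₂, hw₂c, rfl⟩ := hF c z₂ (hc.trans ht)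
    have hαw : α.app _ w₁ = α.app _ w₂ :=
      hGinj _ _ (by simp only [← NatTrans.naturality_apply, hw₁c, hw₂c])
        (by simp only [← NatTrans.naturality_apply, hα])
    rw [h.1 w₁ w₂ (hw₁c.trans hw₂c.symm) hαw]
  · obtain ⟨c, rfl⟩ := hsF x
    obtain ⟨e, he₁, he₂⟩ := hGsurj (α.app C₀ c) g (by rw [← NatTrans.naturality_apply, hxg])
    obtain ⟨w, hwF, hwα⟩ := h.2 c e he₁.symm
    refine ⟨F.map (pullback.snd s t) w, ?_, ?_⟩
    · rw [← Functor.map_comp_apply, ← pullback.condition, Functor.map_comp_apply, hwF]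
    · rw [NatTrans.naturality_apply, hwα, he₂]

end

/-- Let `S ⊆ T` be markings, `F, G` two `T`-adapted `S`-cosheaves,
`α : F ⟶ G` a natural transformation and `P` a generating full subcategory. If the
naturality square of `α` at every morphism of `T` between objects of `P` is a
pullback square, then `α` is `T`-cartesian. -/
theorem isCartesian_of_isCartesian_on_generating
    {C : Type u} [Category.{v} C] {S T : MorphismProperty C}
    (hS : Marking S) (hT : Marking T) (hST : ∀ {X Y : C} (f : X ⟶ Y), S f → T f)
    {F G : C ⥤ Type w}
    (hFc : IsCosheaf hS F) (hFa : IsAdapted hT F)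
    (hGc : IsCosheaf hS G) (hGa : IsAdapted hT G)
    (α : F ⟶ G) (P : C → Prop) (hgen : IsGenerating hS P)
    (h : ∀ {D' D : C} (t : D' ⟶ D), T t → P D' → P D → SquareCartesian α t) :
    IsCartesianNatTrans T α := by
  have hsource : ∀ X D (t : X ⟶ D), T t → P D → SquareCartesian α t := by
    refine hgen.generates _ (fun {C₀ X} s hs hn D t ht hD => ?_)
      (fun X hX D t ht hD => h t ht hX hD)
    have := hS.hasPullback s s hs
    have hst : T (s ≫ t) := hT.comp_mem (hST s hs) ht
    -- `hS.fibrePower s hs 1` unfolds to `pullback s s`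
    have h₁ : ∀ D (t : pullback s s ⟶ D), T t → P D → SquareCartesian α t := hn 1
    exact SquareCartesian.of_comp α s t (hFc.surjective_map s hs) (hGc.surjective_map s hs)
      (hGa s (hST s hs) s).2 (hn 0 D _ hst hD)
      (h₁ D _ (hT.comp_mem (hT.fst_mem s s (hST s hs)) hst) hD)
  have htarget : ∀ X D (t : D ⟶ X), T t → SquareCartesian α t := by
    refine hgen.generates _ (fun {C₀ X} s hs hn D t ht => ?_)
      (fun X hX D t ht => hsource D X t ht hX)
    have := hS.hasPullback s t hs
    exact SquareCartesian.of_pullback_fst α s t (hFc.surjective_map s hs)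
      (hFa s (hST s hs) t).2 (hGa s (hST s hs) t) (hn 0 _ _ (hT.fst_mem s t ht))
  exact fun {D X} t ht => htarget X D t ht
end
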